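/- arXiv:2509.15294 — 4 statements merged into one kernel-verified Lean document; each statement's English description precedes it below -/
import Mathlib

section
/- For any double-occurrence word x ∈ Γ_n, the red-first BPSP cost can be expressed via graph invariants: ξ_n(σ_RF(x)) = n - 1/2 + (1/2)·#dl(x) + (1/2)·W_tot(G_x). -/
/-- `x` is a double-occurrence word of length `2n` over the alphabet `Fin n`:
every symbol occurs exactly twice among positions `0, …, 2n-1`. -/
def DoubleOcc (n : ℕ) (x : ℕ → Fin n) : Prop :=
  ∀ t : Fin n, ((Finset.range (2*n)).filter (fun j => x j = t)).card = 2

/-- The eta function: `[xᵢ₊₁ ∈ {x₀,…,xᵢ}] XOR [xᵢ ∈ {x₀,…,xᵢ₋₁}]` (0-indexed). -/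
def eta (n : ℕ) (x : ℕ → Fin n) (i : ℕ) : ℕ :=
  (if x (i+1) ∈ (Finset.range (i+1)).image x then 1 else 0) ^^^
  (if x i ∈ (Finset.range i).image x then 1 else 0)

/-- The signed weight function `θ_x` on unordered pairs of symbols. -/
def theta {n : ℕ} (x : ℕ → Fin n) (e : Sym2 (Fin n)) : ℤ :=
  -∑ i ∈ Finset.range (2*n - 1),
      (-1 : ℤ)^(eta n x i) * (if e = s(x i, x (i+1)) then 1 else 0)

/-- The edge set of the BPSP graph `G_x`: pairs of distinct consecutive symbols with
nonzero weight. -/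
def edgesB {n : ℕ} (x : ℕ → Fin n) : Finset (Sym2 (Fin n)) :=
  ((Finset.range (2*n - 1)).image (fun i => s(x i, x (i+1)))).filter
    (fun e => ¬ e.IsDiag ∧ theta x e ≠ 0)

/-- BPSP cost: number of adjacent colour changes among positions `0, …, 2n-1`. -/
def xiCost (n : ℕ) (f : ℕ → Bool) : ℕ :=
  ∑ i ∈ Finset.range (2*n - 1), if f i = f (i+1) then 0 else 1

/-- Red-first colouring: first occurrence red (`true`), second blue (`false`). -/
def redFirst {n : ℕ} (x : ℕ → Fin n) (i : ℕ) : Bool :=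
  if x i ∈ (Finset.range i).image x then false else true

/-!
The colour changes between positions `i` and `i+1` exactly when `η(x,i) = 1`, so the cost is
`∑ᵢ (1 - (-1)^η(x,i)) / 2`. At a doubled letter `xᵢ = xᵢ₊₁` these are the only two occurrences of
the symbol, so `η = 1` there. Grouping the remaining positions by the edge `{xᵢ, xᵢ₊₁}` turns
`∑ (-1)^η` into `-W_tot(G_x)`; edges of weight zero contribute nothing to either side.
-/

open Finset

section

variable {n : ℕ} {x : ℕ → Fin n}

theorem DoubleOcc.false_of_three_occurrences (hx : DoubleOcc n x) {j k l : ℕ} (hjk : j < k) (hkl : k < l)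
    (hl : l < 2 * n) (hj : x j = x k) (hlk : x l = x k) : False := by
  have hsub : ({j, k, l} : Finset ℕ) ⊆ (range (2 * n)).filter (fun m => x m = x k) := by
    intro m hm
    simp only [mem_insert, mem_singleton] at hm
    rcases hm with rfl | rfl | rfl <;> simp only [mem_filter, mem_range] <;> grind
  have hcard : ({j, k, l} : Finset ℕ).card = 3 := by
    rw [card_insert_of_notMem (by simp; omega), card_pair (by omega)]
  have := card_le_card hsub
  rw [hx, hcard] at this
  omega

theorem DoubleOcc.notMem_image_of_eq_succ (hx : DoubleOcc n x) {i : ℕ} (hi : i + 1 < 2 * n)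
    (h : x i = x (i + 1)) : x i ∉ (range i).image x := by
  intro hmem
  obtain ⟨j, hj, hji⟩ := mem_image.mp hmem
  exact hx.false_of_three_occurrences (mem_range.mp hj) (Nat.lt_succ_self i) hi hji h.symm

theorem DoubleOcc.eta_eq_one_of_eq_succ (hx : DoubleOcc n x) {i : ℕ} (hi : i + 1 < 2 * n)
    (h : x i = x (i + 1)) : eta n x i = 1 := by
  have hseen : x (i + 1) ∈ (range (i + 1)).image x :=
    mem_image.mpr ⟨i, self_mem_range_succ i, h⟩
  simp [eta, hseen, hx.notMem_image_of_eq_succ hi h]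

theorem eta_eq_ite_redFirst (i : ℕ) :
    eta n x i = if redFirst x i = redFirst x (i + 1) then 0 else 1 := by
  unfold eta redFirst
  split_ifs <;> simp_all

theorem xiCost_redFirst_eq_sum :
    (xiCost n (redFirst x) : ℚ) = ∑ i ∈ range (2 * n - 1), (1 - (-1) ^ eta n x i) / 2 := by
  rw [xiCost, Nat.cast_sum]
  refine sum_congr rfl fun i _ => ?_
  rw [eta_eq_ite_redFirst]
  split <;> norm_num

theorem sum_theta_edgesB :
    ∑ e ∈ edgesB x, theta x e
      = -∑ i ∈ (range (2 * n - 1)).filter (fun i => x i ≠ x (i + 1)), (-1 : ℤ) ^ eta n x i := by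
  have hdrop : ∑ e ∈ edgesB x, theta x e
      = ∑ e ∈ ((range (2 * n - 1)).image fun i => s(x i, x (i + 1))).filter (¬ ·.IsDiag),
          theta x e :=
    sum_subset (fun e he => by simp only [edgesB, mem_filter] at he ⊢; exact ⟨he.1, he.2.1⟩)
      fun e he hne => by simp only [edgesB, mem_filter] at he hne; grind
  rw [hdrop]
  simp only [theta, sum_neg_distrib, neg_inj, mul_ite, mul_one, mul_zero]
  rw [sum_comm, sum_filter]
  refine sum_congr rfl fun i hi => ?_
  simp only [sum_ite_eq', mem_filter, mem_image_of_mem (fun i => s(x i, x (i + 1))) hi,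
    Sym2.mk_isDiag_iff, true_and, ne_eq]

end

theorem redFirst_cost_graph {n : ℕ} (x : ℕ → Fin n) (hx : DoubleOcc n x) :
    (xiCost n (redFirst x) : ℚ)
      = n - 1/2
        + (((Finset.range (2*n - 1)).filter (fun i => x i = x (i+1))).card : ℚ) / 2
        + ((∑ e ∈ edgesB x, theta x e : ℤ) : ℚ) / 2 := by
  set D := (range (2 * n - 1)).filter (fun i => x i = x (i + 1))
  set N := (range (2 * n - 1)).filter (fun i => x i ≠ x (i + 1))
  have hD : ∑ i ∈ D, (1 - (-1 : ℚ) ^ eta n x i) / 2 = D.card := by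
    rw [card_eq_sum_ones, Nat.cast_sum]
    refine sum_congr rfl fun i hi => ?_
    obtain ⟨hi, hxi⟩ := mem_filter.mp hi
    rw [hx.eta_eq_one_of_eq_succ (by rw [mem_range] at hi; omega) hxi]
    norm_num
  have hN : ∑ i ∈ N, (1 - (-1 : ℚ) ^ eta n x i) / 2
      = (N.card - ∑ i ∈ N, (-1 : ℚ) ^ eta n x i) / 2 := by
    rw [← sum_div, sum_sub_distrib, sum_const, nsmul_one]
  have hcard : (D.card : ℚ) + N.card = 2 * n - 1 := by
    have : 1 ≤ 2 * n := by have := (x 0).pos; omega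
    rw [← Nat.cast_add, card_filter_add_card_filter_not, card_range, Nat.cast_sub this]
    push_cast; ring
  rw [xiCost_redFirst_eq_sum, sum_theta_edgesB,
    ← sum_filter_add_sum_filter_not _ (fun i => x i = x (i + 1)), hD, hN]
  push_cast
  linarith
end

section
/- For any double-occurrence word x ∈ Γ_n and any ICC colouring z ∈ {r,b}^n, the number of paint swaps equals the red-first cost minus the cut weight: ξ_n(E_n(x,z)) = ξ_n(σ_RF(x)) - wt_{G_x}(z). -/
/-- The ICC expansion map. Colours: `true` = r, `false` = b. -/
def expandB {n : ℕ} (x : ℕ → Fin n) (z : Fin n → Bool) (i : ℕ) : Bool :=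
  if x i ∈ (Finset.range i).image x then !(z (x i)) else z (x i)

/-- Weight of the cut `z` in the BPSP graph `G_x`. -/
def cutW {n : ℕ} (x : ℕ → Fin n) (z : Fin n → Bool) : ℤ :=
  -∑ k ∈ Finset.range (2*n - 1),
      (-1 : ℤ)^(eta n x k) * (if z (x k) = z (x (k+1)) then 0 else 1)

def isRepeat {n : ℕ} (x : ℕ → Fin n) (i : ℕ) : Bool :=
  decide (x i ∈ (Finset.range i).image x)

lemma expandB_eq_xor {n : ℕ} (x : ℕ → Fin n) (z : Fin n → Bool) (i : ℕ) :
    expandB x z i = xor (isRepeat x i) (z (x i)) := by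
  unfold expandB isRepeat
  split_ifs with h <;> simp [h]

lemma redFirst_eq_not_isRepeat {n : ℕ} (x : ℕ → Fin n) (i : ℕ) :
    redFirst x i = !isRepeat x i := by
  unfold redFirst isRepeat
  split_ifs with h <;> simp [h]

lemma eta_eq_ite {n : ℕ} (x : ℕ → Fin n) (i : ℕ) :
    eta n x i = if isRepeat x i = isRepeat x (i+1) then 0 else 1 := by
  unfold eta isRepeat
  by_cases a : x i ∈ (Finset.range i).image x <;>
    by_cases b : x (i+1) ∈ (Finset.range (i+1)).image x <;> simp [a, b]

/-- A pair swaps in `E(x, z)` iff it swaps in exactly one of `σ_RF(x)` and `z`, and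
`[a ⊕ b] = [a] + (-1)^[a] [b]`. -/
lemma ite_xor_eq_ite_add_neg_one_pow_mul (p q u v : Bool) :
    (if xor u p = xor v q then 0 else 1 : ℤ) =
      (if (!u) = (!v) then 0 else 1) + (-1) ^ (if u = v then 0 else 1) * (if p = q then 0 else 1) := by
  cases p <;> cases q <;> cases u <;> cases v <;> rfl

theorem icc_cost_eq_redFirst_sub_cut_general {n : ℕ} (x : ℕ → Fin n)
    (z : Fin n → Bool) :
    (xiCost n (expandB x z) : ℤ) = (xiCost n (redFirst x) : ℤ) - cutW x z := by
  unfold xiCost cutW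
  push_cast
  rw [sub_neg_eq_add, ← Finset.sum_add_distrib]
  refine Finset.sum_congr rfl fun k _ => ?_
  rw [expandB_eq_xor, expandB_eq_xor, redFirst_eq_not_isRepeat, redFirst_eq_not_isRepeat,
    eta_eq_ite, ite_xor_eq_ite_add_neg_one_pow_mul]

theorem icc_cost_eq_redFirst_sub_cut {n : ℕ} (x : ℕ → Fin n) (hx : DoubleOcc n x)
    (z : Fin n → Bool) :
    (xiCost n (expandB x z) : ℤ) = (xiCost n (redFirst x) : ℤ) - cutW x z :=
  icc_cost_eq_redFirst_sub_cut_general x z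
end

section
/- For any double-occurrence word x ∈ Γ_n, the optimal BPSP cost equals the red-first cost minus the maximum cut weight: min_{f ∈ Ξ_n(x)} ξ_n(f) = ξ_n(σ_RF(x)) - max_{z ∈ {r,b}^n} wt_{G_x}(z). -/
/-- A valid BPSP colouring: the two occurrences of each symbol get opposite colours. -/
def ValidC {n : ℕ} (x : ℕ → Fin n) (f : ℕ → Bool) : Prop :=
  ∀ i j, i < 2*n → j < 2*n → i ≠ j → x i = x j → f i ≠ f j

/-!
Write `E(x, z)` for the colouring that gives the first occurrence of each symbol `t` the colour
`z t` and the second one the opposite colour. Between positions `k` and `k + 1`, `E(x, z)` changes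
colour exactly when the red-first colouring does XOR `z (x k) ≠ z (x (k + 1))`, and `η(x, k)`
records whether the red-first colouring changes there. Hence termwise
`ξ(E(x, z)) = ξ(σ_RF) - wt(z)`. Every valid colouring is an `E(x, z)` (take `z t` to be the colour
of the first occurrence of `t`), and every `E(x, z)` is valid when each symbol occurs exactly twice,
so minimising `ξ` over valid colourings is maximising the cut weight.
-/

/-- The colouring `E_n(x, z)`. -/
def cutColouring {n : ℕ} (x : ℕ → Fin n) (z : Fin n → Bool) (i : ℕ) : Bool :=
  if x i ∈ (Finset.range i).image x then !(z (x i)) else z (x i)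

lemma xiCost_congr {n : ℕ} {f g : ℕ → Bool} (h : ∀ i < 2 * n, f i = g i) :
    xiCost n f = xiCost n g :=
  Finset.sum_congr rfl fun i hi => by
    rw [Finset.mem_range] at hi
    rw [h i (by omega), h (i + 1) (by omega)]

lemma xiCost_cutColouring {n : ℕ} (x : ℕ → Fin n) (z : Fin n → Bool) :
    (xiCost n (cutColouring x z) : ℤ) = xiCost n (redFirst x) - cutW x z := by
  unfold xiCost cutW
  rw [sub_neg_eq_add, Nat.cast_sum, Nat.cast_sum, ← Finset.sum_add_distrib]
  refine Finset.sum_congr rfl fun k _ => ?_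
  unfold cutColouring redFirst eta
  by_cases hnext : x (k + 1) ∈ (Finset.range (k + 1)).image x <;>
    by_cases hcur : x k ∈ (Finset.range k).image x <;>
      simp only [hnext, hcur, if_true, if_false] <;>
        cases z (x k) <;> cases z (x (k + 1)) <;> norm_num

lemma ValidC.exists_eq_cutColouring {n : ℕ} {x : ℕ → Fin n} {f : ℕ → Bool} (hf : ValidC x f) :
    ∃ z : Fin n → Bool, ∀ i < 2 * n, f i = cutColouring x z i := by
  classical
  refine ⟨fun t => if h : ∃ j, x j = t then f (Nat.find h) else false, fun i hi => ?_⟩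
  have hocc : ∃ j, x j = x i := ⟨i, rfl⟩
  have hfirst_le : Nat.find hocc ≤ i := Nat.find_min' hocc rfl
  unfold cutColouring
  simp only [dif_pos hocc]
  by_cases hseen : x i ∈ (Finset.range i).image x
  · obtain ⟨k, hk, hxk⟩ := Finset.mem_image.mp hseen
    have hfirst_lt : Nat.find hocc < i :=
      lt_of_le_of_lt (Nat.find_min' hocc hxk) (Finset.mem_range.mp hk)
    have hne := hf _ i (by omega) hi hfirst_lt.ne (Nat.find_spec hocc)
    rw [if_pos hseen]
    revert hne
    cases f i <;> cases f (Nat.find hocc) <;> simp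
  · have hfirst_eq : Nat.find hocc = i := by
      refine le_antisymm hfirst_le (not_lt.mp fun hlt => hseen ?_)
      exact Finset.mem_image.mpr ⟨_, Finset.mem_range.mpr hlt, Nat.find_spec hocc⟩
    rw [if_neg hseen, hfirst_eq]

-- Otherwise `x i` would occur three times.
lemma DoubleOcc.not_mem_image_range_of_lt {n : ℕ} {x : ℕ → Fin n} (hx : DoubleOcc n x)
    {i j : ℕ} (hij : i < j) (hj : j < 2 * n) (hxij : x i = x j) :
    x i ∉ (Finset.range i).image x := by
  intro hseen
  obtain ⟨k, hk, hxk⟩ := Finset.mem_image.mp hseen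
  rw [Finset.mem_range] at hk
  have hsub : ({k, i, j} : Finset ℕ) ⊆ (Finset.range (2 * n)).filter (fun m => x m = x i) := by
    intro m hm
    simp only [Finset.mem_insert, Finset.mem_singleton] at hm
    rcases hm with rfl | rfl | rfl <;>
      simp [Finset.mem_filter, Finset.mem_range, hxk, hxij.symm] <;> omega
  have hcard : ({k, i, j} : Finset ℕ).card = 3 := by
    rw [Finset.card_insert_of_notMem, Finset.card_insert_of_notMem] <;> simp <;> omega
  have := Finset.card_le_card hsub
  rw [hcard, hx (x i)] at this
  omega

lemma DoubleOcc.validC_cutColouring {n : ℕ} {x : ℕ → Fin n} (hx : DoubleOcc n x)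
    (z : Fin n → Bool) : ValidC x (cutColouring x z) := by
  suffices h : ∀ i j, i < j → j < 2 * n → x i = x j →
      cutColouring x z i ≠ cutColouring x z j by
    intro i j _ _ hne hxij
    rcases hne.lt_or_gt with hlt | hgt
    · exact h i j hlt ‹_› hxij
    · exact (h j i hgt ‹_› hxij.symm).symm
  intro i j hij hj hxij
  have hfirst := hx.not_mem_image_range_of_lt hij hj hxij
  have hsecond : x j ∈ (Finset.range j).image x :=
    Finset.mem_image.mpr ⟨i, Finset.mem_range.mpr hij, hxij⟩
  rw [cutColouring, cutColouring, if_neg hfirst, if_pos hsecond, hxij]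
  cases z (x j) <;> simp

theorem bpsp_eq_redFirst_sub_maxcut {n : ℕ} (x : ℕ → Fin n) (hx : DoubleOcc n x) :
    ((sInf {m : ℕ | ∃ f : ℕ → Bool, ValidC x f ∧ xiCost n f = m} : ℕ) : ℤ)
      = (xiCost n (redFirst x) : ℤ)
        - Finset.univ.sup' Finset.univ_nonempty (fun z : Fin n → Bool => cutW x z) := by
  obtain ⟨zmax, -, hzmax⟩ :=
    Finset.exists_mem_eq_sup' Finset.univ_nonempty (fun z : Fin n → Bool => cutW x z)
  rw [hzmax, ← xiCost_cutColouring]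
  congr 1
  have hmem : xiCost n (cutColouring x zmax) ∈
      {m : ℕ | ∃ f : ℕ → Bool, ValidC x f ∧ xiCost n f = m} :=
    ⟨_, hx.validC_cutColouring zmax, rfl⟩
  refine le_antisymm (Nat.sInf_le hmem) (le_csInf ⟨_, hmem⟩ ?_)
  rintro m ⟨f, hf, rfl⟩
  obtain ⟨z, hz⟩ := hf.exists_eq_cutColouring
  have hcut : cutW x z ≤ cutW x zmax := hzmax ▸ Finset.le_sup' _ (Finset.mem_univ z)
  have hcost : (xiCost n (cutColouring x zmax) : ℤ) ≤ xiCost n (cutColouring x z) := by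
    rw [xiCost_cutColouring, xiCost_cutColouring]
    omega
  rw [xiCost_congr hz]
  exact_mod_cast hcost
end

section
/- For any double-occurrence word x ∈ Γ_n and spin assignment z ∈ {-1,1}^n, the number of paint swaps admits the Ising form ξ_n(E_n(x,z)) = n - 1/2 - (1/2)·Σ_{i=1}^{2n-1} (-1)^{η(x,i)} z_{x_i} z_{x_{i+1}}. -/
/-- The ICC expansion map for spin colourings (`1 ≡ r`, `-1 ≡ b`, `¬` is negation). -/
def expandZ {n : ℕ} (x : ℕ → Fin n) (z : Fin n → ℤ) (i : ℕ) : ℤ :=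
  if x i ∈ (Finset.range i).image x then -(z (x i)) else z (x i)

/-- BPSP cost for spin-valued colourings: number of adjacent colour changes. -/
def xiCostZ (n : ℕ) (f : ℕ → ℤ) : ℕ :=
  ∑ i ∈ Finset.range (2*n - 1), if f i = f (i+1) then 0 else 1

open Finset

theorem neg_one_pow_xor {R : Type*} [Ring R] (m k : ℕ) :
    (-1 : R) ^ (m ^^^ k) = (-1) ^ m * (-1) ^ k := by
  rw [neg_one_pow_eq_pow_mod_two, Nat.xor_mod_two_eq, ← neg_one_pow_eq_pow_mod_two, pow_add]

theorem ite_eq_zero_else_one_of_spins {a b : ℤ} (ha : a = 1 ∨ a = -1) (hb : b = 1 ∨ b = -1) :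
    (if a = b then 0 else 1 : ℚ) = 1 / 2 - 1 / 2 * ((a : ℚ) * b) := by
  rcases ha with rfl | rfl <;> rcases hb with rfl | rfl <;> norm_num

def occurredBefore {n : ℕ} (x : ℕ → Fin n) (i : ℕ) : ℕ :=
  if x i ∈ (range i).image x then 1 else 0

theorem eta_eq_occurredBefore_xor {n : ℕ} (x : ℕ → Fin n) (i : ℕ) :
    eta n x i = occurredBefore x (i + 1) ^^^ occurredBefore x i := rfl

section expandZ

variable {n : ℕ} (x : ℕ → Fin n)

theorem expandZ_eq_neg_one_pow_mul (z : Fin n → ℤ) (i : ℕ) :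
    expandZ x z i = (-1) ^ occurredBefore x i * z (x i) := by
  unfold expandZ occurredBefore
  split_ifs <;> simp

theorem expandZ_mul_expandZ_succ (z : Fin n → ℤ) (i : ℕ) :
    expandZ x z i * expandZ x z (i + 1) = (-1) ^ eta n x i * z (x i) * z (x (i + 1)) := by
  rw [expandZ_eq_neg_one_pow_mul, expandZ_eq_neg_one_pow_mul, eta_eq_occurredBefore_xor,
    neg_one_pow_xor]
  ring

theorem expandZ_eq_one_or_neg_one {z : Fin n → ℤ} (hz : ∀ t, z t = 1 ∨ z t = -1) (i : ℕ) :
    expandZ x z i = 1 ∨ expandZ x z i = -1 := by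
  rw [expandZ_eq_neg_one_pow_mul]
  rcases neg_one_pow_eq_or ℤ (occurredBefore x i) with h | h <;> rcases hz (x i) with h' | h' <;>
    simp [h, h']

end expandZ

theorem ising_cost_general {n : ℕ} (x : ℕ → Fin n)
    (z : Fin n → ℤ) (hz : ∀ t, z t = 1 ∨ z t = -1) :
    (xiCostZ n (expandZ x z) : ℚ)
      = n - 1/2 - (1/2) * ∑ i ∈ Finset.range (2*n - 1),
          (-1 : ℚ)^(eta n x i) * (z (x i) : ℚ) * (z (x (i+1)) : ℚ) := by
  -- `2 * n - 1` truncates at `n = 0`; a word `ℕ → Fin n` rules that case out.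
  have hn : 1 ≤ n := Fin.pos (x 0)
  calc (xiCostZ n (expandZ x z) : ℚ)
      = ∑ i ∈ range (2 * n - 1),
          (1 / 2 - 1 / 2 * ((-1 : ℚ) ^ eta n x i * z (x i) * z (x (i + 1)))) := by
        unfold xiCostZ
        push_cast
        refine sum_congr rfl fun i _ => ?_
        rw [ite_eq_zero_else_one_of_spins (expandZ_eq_one_or_neg_one x hz i)
          (expandZ_eq_one_or_neg_one x hz (i + 1)), ← Int.cast_mul, expandZ_mul_expandZ_succ]
        push_cast
        rfl
    _ = _ := by
        rw [sum_sub_distrib, sum_const, card_range, ← mul_sum, nsmul_eq_mul,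
          Nat.cast_sub (by omega : 1 ≤ 2 * n)]
        push_cast
        ring

theorem ising_cost {n : ℕ} (x : ℕ → Fin n) (hx : DoubleOcc n x)
    (z : Fin n → ℤ) (hz : ∀ t, z t = 1 ∨ z t = -1) :
    (xiCostZ n (expandZ x z) : ℚ)
      = n - 1/2 - (1/2) * ∑ i ∈ Finset.range (2*n - 1),
          (-1 : ℚ)^(eta n x i) * (z (x i) : ℚ) * (z (x (i+1)) : ℚ) :=
  ising_cost_general x z hz
end
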